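/- Let Λ(T) be the operation on isomorphism classes of finite-dimensional complex representations of ℤ/nℤ defined by Λ(V) = Σ_j (-1)^j [Λ^j V]. If V has no nonzero invariant vectors (no eigenvalue 1), then the virtual character of Λ(V^∨) evaluated at a generator g is Π_i (1 - ζ̄_i) where ζ_i are the eigenvalues of g on V, and this value is a nonzero element of ℂ; consequently the class λ_{-1}(V^∨) is invertible in the representation ring R(ℤ/nℤ) localized at the prime ideal ρ. -/

import Mathlib

/-!
As `ζ = e^{2πi/n}` lies on the unit circle, `conj (ζ^a) = ζ^(n-a)`, so `χ` sends
`x = ∏ (1 - T^(n - aᵢ))` to `∏ (1 - conj (ζ^aᵢ))`; no factor vanishes because `ζ` is primitive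
and `0 < n - aᵢ < n`. Since `Φₙ(ζ) = 0`, `χ` factors through `ℤ[T]/(Φₙ)`, so `χ x ≠ 0` forces
`x ∉ ρ`, i.e. `x` lies in the submonoid inverted by the localization.
-/

open Polynomial

theorem Complex.conj_pow_eq_pow_sub {ζ : ℂ} {n a : ℕ} (hζ : ζ ^ n = 1) (hn : n ≠ 0)
    (ha : a ≤ n) : starRingEnd ℂ (ζ ^ a) = ζ ^ (n - a) := by
  rw [← Complex.inv_eq_conj (by rw [norm_pow, norm_eq_one_of_pow_eq_one hζ hn, one_pow])]
  refine inv_eq_of_mul_eq_one_right ?_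
  rw [← pow_add, Nat.add_sub_cancel' ha, hζ]

theorem ker_factor_le_ker_of_isPrimitiveRoot {R : Type*} [CommRing R] [IsDomain R] {n : ℕ}
    (hn : 0 < n) {I : Ideal ℤ[X]} (hI : I ≤ Ideal.span {cyclotomic n ℤ}) (χ : ℤ[X] ⧸ I →+* R)
    (hχ : IsPrimitiveRoot (χ (Ideal.Quotient.mk I X)) n) :
    RingHom.ker (Ideal.Quotient.factor hI) ≤ RingHom.ker χ := by
  intro y hy
  obtain ⟨p, rfl⟩ := Ideal.Quotient.mk_surjective y
  rw [RingHom.mem_ker, Ideal.Quotient.factor_mk, Ideal.Quotient.eq_zero_iff_mem,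
    Ideal.mem_span_singleton] at hy
  obtain ⟨q, rfl⟩ := hy
  have hroot : eval₂ (Int.castRingHom R) (χ (Ideal.Quotient.mk I X)) (cyclotomic n ℤ) = 0 := by
    simpa [eval₂_eq_eval_map] using hχ.isRoot_cyclotomic hn
  rw [RingHom.mem_ker, ← RingHom.comp_apply, ← eval₂_intCastRingHom_X, RingHom.comp_apply,
    eval₂_mul, hroot, zero_mul]

/-- Let `V` be a finite-dimensional complex representation of `ℤ/nℤ` with
no nonzero invariant vectors: the generator `g` acts with eigenvalues `ζₙ^{a i}`,
`ζₙ = e^{2πi/n}`, `0 < a i < n`.  In the representation ring `R(ℤ/nℤ) ≅ ℤ[T]/(1-Tⁿ)`, the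
class `λ₋₁(V^∨) = ∑_j (-1)^j [Λ^j V^∨]` is `x = ∏_i (1 - T^{n - a i})`.  Under the character
map `χ` at `ζₙ` (i.e. `T ↦ ζₙ`), `x` goes to `∏_i (1 - conj(ζₙ^{a i}))`, a nonzero complex
number; consequently `x ∉ ρ = ker(ℤ[T]/(1-Tⁿ) → ℤ[T]/(Φ_n))`, and `x` is invertible in the
localization of `R(ℤ/nℤ)` at the prime ideal `ρ`. -/
theorem stmt17 (n : ℕ) (hn : 0 < n) (d : ℕ) (a : Fin d → ℕ)
    (ha : ∀ i, 0 < a i ∧ a i < n)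
    (χ : (Polynomial ℤ ⧸ Ideal.span {(1 - X ^ n : Polynomial ℤ)}) →+* ℂ)
    (hχ : χ (Ideal.Quotient.mk (Ideal.span {(1 - X ^ n : Polynomial ℤ)}) X)
      = Complex.exp (2 * Real.pi * Complex.I / n))
    (hle : Ideal.span {(1 - X ^ n : Polynomial ℤ)} ≤
      Ideal.span {(Polynomial.cyclotomic n ℤ : Polynomial ℤ)})
    (ρ : Ideal (Polynomial ℤ ⧸ Ideal.span {(1 - X ^ n : Polynomial ℤ)}))
    (hρ : ρ = RingHom.ker (Ideal.Quotient.factor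
      (S := Ideal.span {(1 - X ^ n : Polynomial ℤ)})
      (T := Ideal.span {(Polynomial.cyclotomic n ℤ : Polynomial ℤ)}) hle))
    (M : Submonoid (Polynomial ℤ ⧸ Ideal.span {(1 - X ^ n : Polynomial ℤ)}))
    (hM : (M : Set (Polynomial ℤ ⧸ Ideal.span {(1 - X ^ n : Polynomial ℤ)})) = {y | y ∉ ρ})
    (S : Type*) [CommRing S]
    [Algebra (Polynomial ℤ ⧸ Ideal.span {(1 - X ^ n : Polynomial ℤ)}) S]
    [IsLocalization M S]
    (x : Polynomial ℤ ⧸ Ideal.span {(1 - X ^ n : Polynomial ℤ)})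
    (hx : x = ∏ i, (1 - (Ideal.Quotient.mk (Ideal.span {(1 - X ^ n : Polynomial ℤ)}) X)
      ^ (n - a i))) :
    χ x = ∏ i, (1 - (starRingEnd ℂ) (Complex.exp (2 * Real.pi * Complex.I / n) ^ (a i))) ∧
    (∏ i, (1 - (starRingEnd ℂ) (Complex.exp (2 * Real.pi * Complex.I / n) ^ (a i)))) ≠ 0 ∧
    x ∉ ρ ∧
    IsUnit (algebraMap (Polynomial ℤ ⧸ Ideal.span {(1 - X ^ n : Polynomial ℤ)}) S x) := by
  have hζ := Complex.isPrimitiveRoot_exp n hn.ne'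
  set ζ := Complex.exp (2 * Real.pi * Complex.I / n)
  have hconj i : starRingEnd ℂ (ζ ^ a i) = ζ ^ (n - a i) :=
    Complex.conj_pow_eq_pow_sub hζ.pow_eq_one hn.ne' (ha i).2.le
  have hval : χ x = ∏ i, (1 - starRingEnd ℂ (ζ ^ a i)) := by
    simp only [hx, map_prod, map_sub, map_one, map_pow, hχ, hconj]
  have hne : ∏ i, (1 - starRingEnd ℂ (ζ ^ a i)) ≠ 0 :=
    Finset.prod_ne_zero_iff.mpr fun i _ => by
      rw [hconj, sub_ne_zero, ne_comm]
      exact hζ.pow_ne_one_of_pos_of_lt (by have := ha i; omega) (by have := ha i; omega)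
  have hxρ : x ∉ ρ := fun h =>
    hne (hval ▸ ker_factor_le_ker_of_isPrimitiveRoot hn hle χ (hχ ▸ hζ) (hρ ▸ h))
  exact ⟨hval, hne, hxρ, IsLocalization.map_units S ⟨x, (hM ▸ hxρ : x ∈ (M : Set _))⟩⟩
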